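/- arXiv:2507.09293 — 2 statements merged into one kernel-verified Lean document; each statement's English description precedes it below -/
import Mathlib

section
/- Let φ : ℤ × ℤ → ℂ satisfy (E1) and (E2). Then φ(m,0) + 2m = φ(0,0) for all m ∈ ℤ. -/
/-!
Put `g n = φ(0, n)`; by (E1), `φ(n, 0) = g n - n`, so the claim is `g m = g 0 - m`.
Taking `m = 0` in (E2) gives `φ(n, l) (g l - g (n + l) - n) = 0`. For `l = 0` this says that
each value `g n` is either `n` or `g 0 - n`. For `a ≠ b`, (E1) forces `φ(a, b)` or `φ(b, a)` to
be nonzero, so `g (a + b)` is `g b - a` or `g a - b`. A single value `g m = m` with `g 0 ≠ 2 m`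
then forces `g j = j` for every `j ≠ 0` with `2 j ≠ m`. That is impossible, because `g` cannot
agree with the identity at `N`, `N + 1` and `2 N + 1` for `N > 0`.
-/

section Dichotomy

variable {K : Type*} [Field K] [CharZero K] {g : ℤ → K}

theorem apply_eq_self_of_ne (hsplit : ∀ n, g n = n ∨ g n = g 0 - n)
    (hadd : ∀ a b : ℤ, a ≠ b → g (a + b) = g b - a ∨ g (a + b) = g a - b)
    {m j : ℤ} (hm : g m = m) (hc : g 0 ≠ 2 * m) (hj : j ≠ 0) (hjm : 2 * j ≠ m) :
    g j = j := by
  refine (hsplit j).resolve_right fun hgj => ?_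
  have hsum := hadd j (m - j) (by omega)
  rw [add_sub_cancel, hm] at hsum
  rcases hsum with h | h
  · rcases hsplit (m - j) with h' | h' <;> push_cast at h'
    · exact hj (by exact_mod_cast (by linear_combination (h + h') / 2 : (j : K) = 0))
    · exact hc (by linear_combination -h - h')
  · push_cast at h
    exact hc (by linear_combination -h - hgj)

theorem apply_eq_apply_zero_sub (hsplit : ∀ n, g n = n ∨ g n = g 0 - n)
    (hadd : ∀ a b : ℤ, a ≠ b → g (a + b) = g b - a ∨ g (a + b) = g a - b) (m : ℤ) :
    g m = g 0 - m := by
  by_contra hne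
  have hm := (hsplit m).resolve_right hne
  have hc : g 0 ≠ 2 * m := fun h => hne (by rw [hm, h]; ring)
  obtain ⟨N, hN0, hmN⟩ : ∃ N : ℤ, 0 < N ∧ m < N :=
    ⟨|m| + 1, by positivity, by linarith [le_abs_self m]⟩
  have hN : g N = N := apply_eq_self_of_ne hsplit hadd hm hc (by omega) (by omega)
  have hN₁ : g (N + 1) = (N + 1 : ℤ) :=
    apply_eq_self_of_ne hsplit hadd hm hc (by omega) (by omega)
  have hN₂ : g (N + (N + 1)) = (N + (N + 1) : ℤ) :=
    apply_eq_self_of_ne hsplit hadd hm hc (by omega) (by omega)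
  rcases hadd N (N + 1) (by omega) with h | h <;> simp only [hN, hN₁, hN₂] at h <;>
    norm_cast at h <;> omega

end Dichotomy

section AntiPreLie

variable {K : Type*} [Field K] {φ : ℤ × ℤ → K}

theorem mul_sub_apply_zero_add_eq_zero
    (hE2 : ∀ m n l : ℤ, ((n : K) - m) * φ (m + n, l)
        = φ (m, l) * φ (n, m + l) - φ (n, l) * φ (m, n + l)) (n l : ℤ) :
    φ (n, l) * (φ (0, l) - φ (0, n + l) - n) = 0 := by
  have h := hE2 0 n l
  simp only [zero_add, Int.cast_zero, sub_zero] at h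
  linear_combination -h

theorem apply_zero_left_eq_or (hE1 : ∀ m n : ℤ, φ (m, n) - φ (n, m) = (n : K) - m)
    (hE2 : ∀ m n l : ℤ, ((n : K) - m) * φ (m + n, l)
        = φ (m, l) * φ (n, m + l) - φ (n, l) * φ (m, n + l)) (n : ℤ) :
    φ (0, n) = n ∨ φ (0, n) = φ (0, 0) - n := by
  have h := mul_sub_apply_zero_add_eq_zero hE2 n 0
  rw [add_zero, show φ (n, 0) = φ (0, n) - n by linear_combination -hE1 0 n] at h
  rcases mul_eq_zero.mp h with h | h
  · exact .inl (by linear_combination h)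
  · exact .inr (by linear_combination -h)

theorem apply_zero_left_add_eq_or [CharZero K]
    (hE1 : ∀ m n : ℤ, φ (m, n) - φ (n, m) = (n : K) - m)
    (hE2 : ∀ m n l : ℤ, ((n : K) - m) * φ (m + n, l)
        = φ (m, l) * φ (n, m + l) - φ (n, l) * φ (m, n + l)) {a b : ℤ} (hab : a ≠ b) :
    φ (0, a + b) = φ (0, b) - a ∨ φ (0, a + b) = φ (0, a) - b := by
  have hφ : φ (a, b) ≠ 0 ∨ φ (b, a) ≠ 0 := by
    by_contra! h
    have := hE1 a b
    rw [h.1, h.2, sub_zero, eq_comm, sub_eq_zero] at this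
    exact hab (by exact_mod_cast this : b = a).symm
  rcases hφ with h | h
  · have := (mul_eq_zero.mp (mul_sub_apply_zero_add_eq_zero hE2 a b)).resolve_left h
    exact .inl (by linear_combination -this)
  · have := (mul_eq_zero.mp (mul_sub_apply_zero_add_eq_zero hE2 b a)).resolve_left h
    exact .inr (by rw [add_comm]; linear_combination -this)

end AntiPreLie

theorem stmt_4 (φ : ℤ × ℤ → ℂ)
    (hE1 : ∀ m n : ℤ, φ (m, n) - φ (n, m) = (n : ℂ) - m)
    (hE2 : ∀ m n l : ℤ, ((n : ℂ) - m) * φ (m + n, l)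
        = φ (m, l) * φ (n, m + l) - φ (n, l) * φ (m, n + l)) :
    ∀ m : ℤ, φ (m, 0) + 2 * m = φ (0, 0) := by
  intro m
  have hg := apply_eq_apply_zero_sub (g := fun n => φ (0, n))
    (apply_zero_left_eq_or hE1 hE2) (fun _ _ => apply_zero_left_add_eq_or hE1 hE2) m
  linear_combination hg + hE1 m 0
end

section
/- Let φ : ℤ × ℤ → ℂ satisfy (E1) and (E2). Let L be a complex Lie algebra admitting a basis W : ℤ → L with ⁅W_m, W_n⁆ = (n−m)·W_{m+n} for all m,n ∈ ℤ (the Witt algebra), and let S = ℤ →₀ ℂ be the L-module on which the action is determined by W_m · v_n = −φ(m,n)·v_{m+n}, where {v_n | n ∈ ℤ} is the standard basis of S. Then S is an indecomposable representation of L: there do not exist L-submodules S₁, S₂ of S, both nonzero, with S₁ ∩ S₂ = 0 and S₁ + S₂ = S. -/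
/-! Put `h k = φ(0, k) + k`. Taking `m = 0` in (E2), and `l = 0` in (E2) combined with (E1), shows that
whenever `h m ≠ h n` one of `h n = 2n + m`, `h m = 2m + n` holds; this is impossible for `n` outside a
finite set, so `h` is constant, and then `φ(m, n) = c - 2m - n` with `c = φ(0, 0)`.

In the module, `W_m v_n = (2m + n - c) v_{m+n}`. Since `W_0` acts diagonally with the pairwise distinct
eigenvalues `n - c`, every nonzero submodule contains some `v_p`; and `W_{q-p}` sends `v_p` to a nonzero
multiple of `v_q` unless `2q - p = c`, which a detour through a suitable `v_r` avoids. So every nonzero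
submodule is everything: the module is irreducible, in particular indecomposable. -/

open Finsupp

theorem exists_intCast_notMem (s : Finset ℂ) : ∃ n : ℤ, (n : ℂ) ∉ s := by
  obtain ⟨_, ⟨n, rfl⟩, hn⟩ :=
    (Set.infinite_range_of_injective Int.cast_injective).exists_notMem_finset s
  exact ⟨n, hn⟩

theorem intCast_sub_ne_zero {m n : ℤ} (h : m ≠ n) : (m : ℂ) - n ≠ 0 :=
  sub_ne_zero.mpr (Int.cast_injective.ne h)

section Classification

variable {φ : ℤ × ℤ → ℂ}

theorem phi_swap (hE1 : ∀ m n : ℤ, φ (m, n) - φ (n, m) = (n : ℂ) - m) (m n : ℤ) :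
    φ (n, m) = φ (m, n) + m - n := by
  linear_combination -hE1 m n

theorem phi_zero_add_of_ne_zero
    (hE2 : ∀ m n l : ℤ, ((n : ℂ) - m) * φ (m + n, l)
        = φ (m, l) * φ (n, m + l) - φ (n, l) * φ (m, n + l))
    {n l : ℤ} (h : φ (n, l) ≠ 0) : φ (0, n + l) = φ (0, l) - n := by
  have e := hE2 0 n l
  simp only [Int.cast_zero, sub_zero, zero_add] at e
  have : φ (n, l) * (φ (0, l) - φ (0, n + l) - n) = 0 := by linear_combination -e
  linear_combination -(mul_eq_zero.mp this).resolve_left h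

/-- `(E2)` at `l = 0`, with `φ(k, 0)` and `φ(n, m)` eliminated by `(E1)`. -/
theorem phi_mul_eq (hE1 : ∀ m n : ℤ, φ (m, n) - φ (n, m) = (n : ℂ) - m)
    (hE2 : ∀ m n l : ℤ, ((n : ℂ) - m) * φ (m + n, l)
        = φ (m, l) * φ (n, m + l) - φ (n, l) * φ (m, n + l)) (m n : ℤ) :
    ((n : ℂ) - m) * (φ (0, m) + φ (0, m + n) - 2 * m - n)
      = φ (m, n) * (φ (0, m) - φ (0, n) + n - m) := by
  have e := hE2 m n 0
  simp only [add_zero] at e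
  have h0 : ∀ k : ℤ, φ (k, 0) = φ (0, k) - k := fun k => by
    linear_combination hE1 k 0
  rw [h0, h0, h0, phi_swap hE1 m n] at e
  push_cast at e
  linear_combination e

theorem phi_zero_eq_of_phi_eq_zero (hE1 : ∀ m n : ℤ, φ (m, n) - φ (n, m) = (n : ℂ) - m)
    (hE2 : ∀ m n l : ℤ, ((n : ℂ) - m) * φ (m + n, l)
        = φ (m, l) * φ (n, m + l) - φ (n, l) * φ (m, n + l))
    {m n : ℤ} (hmn : m ≠ n) (h : φ (n, m) = 0) : φ (0, n) = n + m := by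
  have hne : φ (m, n) ≠ 0 := by
    intro h'
    have := hE1 m n
    rw [h, h', sub_zero] at this
    exact intCast_sub_ne_zero hmn.symm this.symm
  have hadd := phi_zero_add_of_ne_zero hE2 hne
  have e := phi_mul_eq hE1 hE2 n m
  rw [h, zero_mul, add_comm n m, hadd] at e
  have := (mul_eq_zero.mp e).resolve_left (intCast_sub_ne_zero hmn)
  linear_combination this / 2

theorem phi_zero_dichotomy (hE1 : ∀ m n : ℤ, φ (m, n) - φ (n, m) = (n : ℂ) - m)
    (hE2 : ∀ m n l : ℤ, ((n : ℂ) - m) * φ (m + n, l)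
        = φ (m, l) * φ (n, m + l) - φ (n, l) * φ (m, n + l))
    {m n : ℤ} (hmn : m ≠ n) (h : φ (0, m) + m ≠ φ (0, n) + n) :
    φ (0, n) = n + m ∨ φ (0, m) = m + n := by
  by_cases hnm : φ (n, m) = 0
  · exact .inl (phi_zero_eq_of_phi_eq_zero hE1 hE2 hmn hnm)
  by_cases hmn' : φ (m, n) = 0
  · exact .inr (phi_zero_eq_of_phi_eq_zero hE1 hE2 hmn.symm hmn')
  have h₁ := phi_zero_add_of_ne_zero hE2 hnm
  have h₂ := phi_zero_add_of_ne_zero hE2 hmn'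
  rw [add_comm n m] at h₁
  exact absurd (by linear_combination h₂ - h₁) h

theorem phi_zero_add_self_eq (hE1 : ∀ m n : ℤ, φ (m, n) - φ (n, m) = (n : ℂ) - m)
    (hE2 : ∀ m n l : ℤ, ((n : ℂ) - m) * φ (m + n, l)
        = φ (m, l) * φ (n, m + l) - φ (n, l) * φ (m, n + l)) (p q : ℤ) :
    φ (0, p) + p = φ (0, q) + q := by
  by_contra hpq
  obtain ⟨n, hn⟩ := exists_intCast_notMem ({(p : ℂ), (q : ℂ), (φ (0, p) + p - q) / 2,
    (φ (0, q) + q - p) / 2, φ (0, p) - p, φ (0, q) - q} : Finset ℂ)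
  simp only [Finset.mem_insert, Finset.mem_singleton, not_or] at hn
  obtain ⟨hnp, hnq, hp₁, hq₁, hp₂, hq₂⟩ := hn
  have generic : ∀ m : ℤ, (n : ℂ) ≠ m → (n : ℂ) ≠ φ (0, m) - m →
      φ (0, m) + m ≠ φ (0, n) + n → φ (0, n) = n + m := fun m hm hm' hne =>
    (phi_zero_dichotomy hE1 hE2 (fun h => hm (congrArg _ h.symm)) hne).resolve_right
      fun h => hm' (by linear_combination -h)
  by_cases hp : φ (0, p) + p = φ (0, n) + n
  · have hq : φ (0, q) + q ≠ φ (0, n) + n := hp ▸ Ne.symm hpq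
    exact hp₁ (by linear_combination -hp / 2 - generic q hnq hq₂ hq / 2)
  · have hn := generic p hnp hp₂ hp
    have hq : φ (0, q) + q ≠ φ (0, n) + n := fun h => hq₁ (by linear_combination -h / 2 - hn / 2)
    have : (p : ℂ) = q := by linear_combination generic q hnq hq₂ hq - hn
    exact hpq (by rw [Int.cast_injective this])

theorem phi_eq_of_ne (hE1 : ∀ m n : ℤ, φ (m, n) - φ (n, m) = (n : ℂ) - m)
    (hE2 : ∀ m n l : ℤ, ((n : ℂ) - m) * φ (m + n, l)
        = φ (m, l) * φ (n, m + l) - φ (n, l) * φ (m, n + l))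
    {m n : ℤ} (hmn : m ≠ n) : φ (m, n) = φ (0, 0) - 2 * m - n := by
  have e := phi_mul_eq hE1 hE2 m n
  have hm := phi_zero_add_self_eq hE1 hE2 m 0
  have hn := phi_zero_add_self_eq hE1 hE2 n 0
  have hmn' := phi_zero_add_self_eq hE1 hE2 (m + n) 0
  push_cast at hm hn hmn'
  have : ((n : ℂ) - m) * (φ (m, n) - (φ (0, 0) - 2 * m - n)) = 0 := by
    linear_combination -e / 2 + φ (m, n) * (hn - hm) / 2 + ((n : ℂ) - m) * (hm + hmn') / 2
  linear_combination (mul_eq_zero.mp this).resolve_left (intCast_sub_ne_zero hmn.symm)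

theorem phi_eq (hE1 : ∀ m n : ℤ, φ (m, n) - φ (n, m) = (n : ℂ) - m)
    (hE2 : ∀ m n l : ℤ, ((n : ℂ) - m) * φ (m + n, l)
        = φ (m, l) * φ (n, m + l) - φ (n, l) * φ (m, n + l))
    (m n : ℤ) : φ (m, n) = φ (0, 0) - 2 * m - n := by
  rcases ne_or_eq m n with hmn | rfl
  · exact phi_eq_of_ne hE1 hE2 hmn
  -- `(E2)` at `(m - j, j, m)` expresses `φ(m, m)` through off-diagonal values.
  set j : ℤ := m.natAbs + 1
  have e := hE2 (m - j) j m
  rw [sub_add_cancel, phi_eq_of_ne hE1 hE2 (show m - j ≠ m by omega),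
    phi_eq_of_ne hE1 hE2 (show j ≠ m - j + m by omega), phi_eq_of_ne hE1 hE2 (show j ≠ m by omega),
    phi_eq_of_ne hE1 hE2 (show m - j ≠ j + m by omega)] at e
  push_cast at e
  have : ((j : ℂ) - (m - j)) * (φ (m, m) - (φ (0, 0) - 2 * m - m)) = 0 := by linear_combination e
  have hj : (j : ℂ) - (m - j) ≠ 0 := by
    exact_mod_cast intCast_sub_ne_zero (show j ≠ m - j by omega)
  exact sub_eq_zero.mp ((mul_eq_zero.mp this).resolve_left hj)

end Classification

/-- Subtracting `μ j • v` from `T v` kills the `j`-th coordinate and rescales the others by nonzero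
factors, so the support shrinks while staying inside `p`. -/
theorem Submodule.single_one_mem_of_mem_support {K ι : Type*} [Field K] {p : Submodule K (ι →₀ K)}
    {T : (ι →₀ K) → ι →₀ K} {μ : ι → K} (hμ : Function.Injective μ)
    (hT : ∀ v i, T v i = μ i * v i) (hp : ∀ v ∈ p, T v ∈ p) {v : ι →₀ K} (hv : v ∈ p) {i : ι}
    (hi : i ∈ v.support) : single i 1 ∈ p := by
  classical
  induction hk : v.support.card generalizing v with
  | zero => simp_all
  | succ k ih =>
    by_cases hsub : v.support ⊆ {i}
    · obtain ⟨b, rfl⟩ := support_subset_singleton'.mp hsub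
      have hb : b ≠ 0 := by simpa using hi
      simpa [smul_single, hb] using p.smul_mem b⁻¹ hv
    obtain ⟨j, hj, hji⟩ := Finset.not_subset.mp hsub
    rw [Finset.mem_singleton] at hji
    have hw : ∀ l, (T v - μ j • v) l = (μ l - μ j) * v l := fun l => by simp [hT]; ring
    have hws : (T v - μ j • v).support = v.support.erase j := by
      ext l
      simp only [mem_support_iff, hw, Finset.mem_erase, ne_eq, mul_eq_zero, sub_eq_zero,
        hμ.eq_iff, not_or]
    refine ih (v := T v - μ j • v) (p.sub_mem (hp v hv) (p.smul_mem _ hv)) ?_ ?_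
    · rw [hws]
      exact Finset.mem_erase.mpr ⟨Ne.symm hji, hi⟩
    · rw [hws, Finset.card_erase_of_mem hj, hk, Nat.add_sub_cancel]

theorem LieSubmodule.mem_of_lie_eq_smul {K L M : Type*} [Field K] [LieRing L] [LieAlgebra K L]
    [AddCommGroup M] [Module K M] [LieRingModule L M] (N : LieSubmodule K L M) {x : L} {u w : M}
    {a : K} (ha : a ≠ 0) (h : ⁅x, u⁆ = a • w) (hu : u ∈ N) : w ∈ N := by
  have : w = a⁻¹ • ⁅x, u⁆ := by rw [h, inv_smul_smul₀ ha]
  exact this ▸ N.smul_mem _ (N.lie_mem hu)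

section

variable {L : Type*} [LieRing L] [LieAlgebra ℂ L] [LieRingModule L (ℤ →₀ ℂ)] {W : ℤ → L} {c : ℂ}

theorem lie_W_zero_apply [LieModule ℂ L (ℤ →₀ ℂ)]
    (hW : ∀ m n : ℤ, ⁅W m, single n (1 : ℂ)⁆ = ((2 * m + n : ℂ) - c) • single (m + n) 1)
    (v : ℤ →₀ ℂ) (n : ℤ) : ⁅W 0, v⁆ n = (n - c) * v n := by
  induction v using Finsupp.induction_linear with
  | zero => simp
  | add f g hf hg => rw [lie_add, Finsupp.add_apply, hf, hg, Finsupp.add_apply, mul_add]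
  | single a b =>
    rw [← smul_single_one, lie_smul, hW, zero_add]
    by_cases hna : a = n <;> simp [hna]; ring

theorem single_mem_of_single_mem
    (hW : ∀ m n : ℤ, ⁅W m, single n (1 : ℂ)⁆ = ((2 * m + n : ℂ) - c) • single (m + n) 1)
    (N : LieSubmodule ℂ L (ℤ →₀ ℂ)) {p : ℤ} (hp : single p 1 ∈ N) (q : ℤ) : single q 1 ∈ N := by
  have hop : ∀ p q : ℤ, (2 * q - p : ℂ) ≠ c → single p 1 ∈ N → single q 1 ∈ N := by
    intro p q hpq hp
    have h := hW (q - p) p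
    rw [sub_add_cancel] at h
    refine N.mem_of_lie_eq_smul (sub_ne_zero.mpr fun h' => hpq ?_) h hp
    push_cast at h'
    linear_combination h'
  obtain ⟨r, hr⟩ := exists_intCast_notMem ({(c + p) / 2, 2 * q - c} : Finset ℂ)
  simp only [Finset.mem_insert, Finset.mem_singleton, not_or] at hr
  refine hop r q (fun h => hr.2 ?_) (hop p r (fun h => hr.1 ?_) hp)
  · linear_combination -h
  · linear_combination h / 2

theorem LieSubmodule.eq_top_of_ne_bot [LieModule ℂ L (ℤ →₀ ℂ)]
    (hW : ∀ m n : ℤ, ⁅W m, single n (1 : ℂ)⁆ = ((2 * m + n : ℂ) - c) • single (m + n) 1)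
    {N : LieSubmodule ℂ L (ℤ →₀ ℂ)} (hN : N ≠ ⊥) : N = ⊤ := by
  obtain ⟨v, hv, hv0⟩ := Submodule.exists_mem_ne_zero_of_ne_bot
    (mt (LieSubmodule.toSubmodule_eq_bot N).mp hN)
  obtain ⟨p, hp⟩ := support_nonempty_iff.mpr hv0
  have hsingle := single_mem_of_single_mem hW N <|
    N.toSubmodule.single_one_mem_of_mem_support (T := (⁅W 0, ·⁆))
      (fun _ _ h => Int.cast_injective (sub_left_injective h)) (lie_W_zero_apply hW)
      (fun _ => N.lie_mem) hv hp
  rw [eq_top_iff]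
  rintro v -
  induction v using Finsupp.induction_linear with
  | zero => exact N.zero_mem
  | add f g hf hg => exact N.add_mem hf hg
  | single n a => exact smul_single_one n a ▸ N.smul_mem a (hsingle n)

end

theorem stmt_10_general (φ : ℤ × ℤ → ℂ)
    (hE1 : ∀ m n : ℤ, φ (m, n) - φ (n, m) = (n : ℂ) - m)
    (hE2 : ∀ m n l : ℤ, ((n : ℂ) - m) * φ (m + n, l)
        = φ (m, l) * φ (n, m + l) - φ (n, l) * φ (m, n + l))
    (L : Type) [LieRing L] [LieAlgebra ℂ L]
    (B : Module.Basis ℤ ℂ L)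
    [LieRingModule L (ℤ →₀ ℂ)] [LieModule ℂ L (ℤ →₀ ℂ)]
    (hact : ∀ m n : ℤ, ⁅B m, (Finsupp.single n 1 : ℤ →₀ ℂ)⁆
        = (-φ (m, n)) • (Finsupp.single (m + n) 1 : ℤ →₀ ℂ)) :
    ¬ ∃ S₁ S₂ : LieSubmodule ℂ L (ℤ →₀ ℂ),
      S₁ ≠ ⊥ ∧ S₂ ≠ ⊥ ∧ S₁ ⊓ S₂ = ⊥ ∧ S₁ ⊔ S₂ = ⊤ := by
  rintro ⟨S₁, S₂, h₁, h₂, hinf, -⟩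
  have hW : ∀ m n : ℤ,
      ⁅B m, single n (1 : ℂ)⁆ = ((2 * m + n : ℂ) - φ (0, 0)) • single (m + n) 1 := fun m n => by
    rw [hact, phi_eq hE1 hE2]
    congr 1
    ring
  rw [LieSubmodule.eq_top_of_ne_bot hW h₁, LieSubmodule.eq_top_of_ne_bot hW h₂, inf_idem] at hinf
  exact top_ne_bot hinf

theorem stmt_10 (φ : ℤ × ℤ → ℂ)
    (hE1 : ∀ m n : ℤ, φ (m, n) - φ (n, m) = (n : ℂ) - m)
    (hE2 : ∀ m n l : ℤ, ((n : ℂ) - m) * φ (m + n, l)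
        = φ (m, l) * φ (n, m + l) - φ (n, l) * φ (m, n + l))
    (L : Type) [LieRing L] [LieAlgebra ℂ L]
    (B : Module.Basis ℤ ℂ L)
    (hB : ∀ m n : ℤ, ⁅B m, B n⁆ = ((n : ℂ) - m) • B (m + n))
    [LieRingModule L (ℤ →₀ ℂ)] [LieModule ℂ L (ℤ →₀ ℂ)]
    (hact : ∀ m n : ℤ, ⁅B m, (Finsupp.single n 1 : ℤ →₀ ℂ)⁆
        = (-φ (m, n)) • (Finsupp.single (m + n) 1 : ℤ →₀ ℂ)) :
    ¬ ∃ S₁ S₂ : LieSubmodule ℂ L (ℤ →₀ ℂ),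
      S₁ ≠ ⊥ ∧ S₂ ≠ ⊥ ∧ S₁ ⊓ S₂ = ⊥ ∧ S₁ ⊔ S₂ = ⊤ :=
  stmt_10_general φ hE1 hE2 L B hact
end
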